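/- The generalized Markov measure M := Φ(μ), restricted to the Borel σ-algebra of Σ, coincides with the unique shift-invariant Borel probability measure M̄ determined on cylinders by M̄(_m[e_m,...,e_n]) = ∫ p_{e_m}(x) ⋯ p_{e_n}(w_{e_{n-1}}∘⋯∘w_{e_m}x) dμ(x). -/

import Mathlib

open MeasureTheory ENNReal Filter

/-- A contractive Markov system on a metric space `K` with vertex type `V` and edge type `E`. -/
structure CMS (E V K : Type*) [Fintype E] [MetricSpace K] [MeasurableSpace K] where
  i : E → V
  t : E → V
  Ks : V → Set K
  w : E → K → K
  p : E → K → ℝ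
  a : ℝ
  ha0 : 0 < a
  ha1 : a < 1
  Ks_nonempty : ∀ v, (Ks v).Nonempty
  Ks_meas : ∀ v, MeasurableSet (Ks v)
  Ks_disj : ∀ v v', v ≠ v' → Disjoint (Ks v) (Ks v')
  Ks_cover : ∀ x : K, ∃ v, x ∈ Ks v
  w_meas : ∀ e, Measurable (w e)
  p_meas : ∀ e, Measurable (p e)
  p_nonneg : ∀ e x, 0 ≤ p e x
  p_sum : ∀ x : K, ∑ e, p e x = 1
  p_zero : ∀ e, ∀ x ∉ Ks (i e), p e x = 0
  w_maps : ∀ e, Set.MapsTo (w e) (Ks (i e)) (Ks (t e))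
  contractive : ∀ v, ∀ x ∈ Ks v, ∀ y ∈ Ks v,
      ∑ e, p e x * dist (w e x) (w e y) ≤ a * dist x y

variable {E V K : Type*} [Fintype E] [MetricSpace K] [MeasurableSpace K]

/-- `S.orbit e m x j = w_{e_{m+j}} ∘ ⋯ ∘ w_{e_m} (x)`. -/
def CMS.orbit (S : CMS E V K) (e : ℤ → E) (m : ℤ) (x : K) : ℕ → K
  | 0 => S.w (e m) x
  | j + 1 => S.w (e (m + j + 1)) (S.orbit e m x j)

/-- `S.pathProb e m x j = p_{e_m}(x) p_{e_{m+1}}(w_{e_m}x) ⋯ p_{e_{m+j}}(w_{e_{m+j-1}}∘⋯∘w_{e_m}x)`. -/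
def CMS.pathProb (S : CMS E V K) (e : ℤ → E) (m : ℤ) (x : K) : ℕ → ℝ
  | 0 => S.p (e m) x
  | j + 1 => S.pathProb e m x j * S.p (e (m + j + 1)) (S.orbit e m x j)

/-- The σ-algebra `𝒜_m` on `Σ = E^ℤ` generated by the coordinates with index `≥ m`. -/
def Am (E : Type*) (m : ℤ) : MeasurableSpace (ℤ → E) :=
  ⨆ (i : ℤ) (_ : m ≤ i), MeasurableSpace.comap (fun σ => σ i) ⊤

/-- The cylinder `_m[e_m, …, e_{m+j}]`. -/
def cyl (m : ℤ) (j : ℕ) (e : ℤ → E) : Set (ℤ → E) :=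
  {σ | ∀ k : ℤ, m ≤ k → k ≤ m + j → σ k = e k}

/-- `P` is the family of Markov measures `P^m_x` on `(Σ, 𝒜_m)` of the CMS `S`. -/
def IsKernel (S : CMS E V K) (P : ∀ m : ℤ, K → @Measure (ℤ → E) (Am E m)) : Prop :=
  (∀ (m : ℤ) (x : K), @IsProbabilityMeasure _ (Am E m) (P m x)) ∧
  ∀ (m : ℤ) (x : K) (e : ℤ → E) (j : ℕ),
    P m x (cyl m j e) = ENNReal.ofReal (S.pathProb e m x j)

/-- The `m`-th lift `Φ_m(ν)(A) = ∫ P^m_x(A) dν(x)`. -/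
noncomputable def liftMeas (P : ∀ m : ℤ, K → @Measure (ℤ → E) (Am E m))
    (m : ℤ) (ν : Measure K) (A : Set (ℤ → E)) : ℝ≥0∞ :=
  ∫⁻ x, P m x A ∂ν

/-- The lift outer measure `Φ(ν)`, via coverings `B ⊆ ⋃_{m ≤ 0} A_m`, `A_m ∈ 𝒜_m` (indexed by `m = -n`). -/
noncomputable def PhiM (P : ∀ m : ℤ, K → @Measure (ℤ → E) (Am E m))
    (ν : Measure K) (B : Set (ℤ → E)) : ℝ≥0∞ :=
  ⨅ (A : ℕ → Set (ℤ → E)) (_ : ∀ n : ℕ, MeasurableSet[Am E (-(n : ℤ))] (A n))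
    (_ : B ⊆ ⋃ n, A n), ∑' n : ℕ, liftMeas P (-(n : ℤ)) ν (A n)

/-- `Y^{x_1…x_N}_{m0}(σ) = w_{σ_0}∘⋯∘w_{σ_m}(x_{i(σ_m)})`. -/
noncomputable def CMS.Y (S : CMS E V K) (xs : V → K) (m : ℤ) (σ : ℤ → E) : K :=
  S.orbit σ m (xs (S.i (σ m))) (-m).toNat

/-- The uniform measure `(1/N) ∑_i δ_{x_i}`. -/
noncomputable def unif [Fintype V] (xs : V → K) : Measure K :=
  ((Fintype.card V : ℝ≥0∞))⁻¹ • ∑ v : V, Measure.dirac (xs v)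

/-- The measure `P^m_{x_1…x_N} = Φ_m((1/N)∑δ_{x_i}) = (1/N)∑_i P^m_{x_i}`. -/
noncomputable def PmMix [Fintype V] (P : ∀ m : ℤ, K → @Measure (ℤ → E) (Am E m))
    (xs : V → K) (m : ℤ) : @Measure (ℤ → E) (Am E m) :=
  ((Fintype.card V : ℝ≥0∞))⁻¹ • ∑ v : V, P m (xs v)

/-- The product (Borel) σ-algebra on `Σ = E^ℤ`, generated by the cylinders. -/
def sigAll (E : Type*) : MeasurableSpace (ℤ → E) :=
  @MeasurableSpace.pi ℤ (fun _ => E) (fun _ => ⊤)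

/-- The left shift on `Σ = E^ℤ`. -/
def shiftMap {E : Type*} (σ : ℤ → E) : ℤ → E := fun n => σ (n + 1)

/-! For `A ∈ 𝒜_m` the map `x ↦ P^m_x(A)` is measurable, and `Φ_m(μ)` agrees with `M̄` on the
cylinders starting at `m`, a π-system generating `𝒜_m`; hence `Φ_m(μ) = M̄` on `𝒜_m`. The
σ-algebras `𝒜_{-n}` increase with `n`, so their union is an algebra generating the Borel
σ-algebra, and a countable cover by sets of this algebra can be re-indexed injectively so that
its `n`-th set lies in `𝒜_{-n}`. Hence `Φ(μ)(B)` is the outer measure of `B` induced by `M̄` on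
this algebra, which equals `M̄(B)` for Borel `B` by Carathéodory's extension theorem. -/

open MeasurableSpace Set Function

section MeasureTheory

variable {α : Type*}

theorem lintegral_apply_eq_of_isPiSystem {β : Type*} [MeasurableSpace α] [mβ : MeasurableSpace β]
    {μ : Measure α} [IsProbabilityMeasure μ] {κ : α → Measure β}
    [∀ a, IsProbabilityMeasure (κ a)] {ν : Measure β} [IsProbabilityMeasure ν]
    {C : Set (Set β)} (hgen : mβ = generateFrom C) (hC : IsPiSystem C)
    (hκ : ∀ s ∈ C, Measurable fun a => κ a s) (hν : ∀ s ∈ C, ∫⁻ a, κ a s ∂μ = ν s)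
    {s : Set β} (hs : MeasurableSet s) :
    ∫⁻ a, κ a s ∂μ = ν s := by
  have hκm : Measurable κ := .measure_of_isPiSystem_of_isProbabilityMeasure hgen hC hκ
  have := isProbabilityMeasure_bind hκm.aemeasurable
    (ae_of_all μ fun a => (inferInstance : IsProbabilityMeasure (κ a)))
  have hbind : μ.bind κ = ν := by
    refine ext_of_generate_finite C hgen hC (fun t ht => ?_) (by simp)
    rw [Measure.bind_apply (hgen ▸ measurableSet_generateFrom ht) hκm.aemeasurable, hν t ht]
  rw [← Measure.bind_apply hs hκm.aemeasurable, hbind]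

theorem isSetAlgebra_iUnion_measurableSet {ι : Type*} [SemilatticeSup ι] [Nonempty ι]
    {ℱ : ι → MeasurableSpace α} (hℱ : Monotone ℱ) :
    IsSetAlgebra (⋃ i, {s | MeasurableSet[ℱ i] s}) where
  empty_mem := mem_iUnion.2 ⟨Classical.arbitrary ι, @MeasurableSet.empty _ (ℱ _)⟩
  compl_mem := by
    simp only [mem_iUnion, mem_ofPred_eq]
    exact fun s ⟨i, hs⟩ => ⟨i, hs.compl⟩
  union_mem := by
    simp only [mem_iUnion, mem_ofPred_eq]
    exact fun s t ⟨i, hs⟩ ⟨j, ht⟩ =>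
      ⟨i ⊔ j, (hℱ le_sup_left _ hs).union (hℱ le_sup_right _ ht)⟩

theorem IsSetAlgebra.measure_eq_iInf_tsum_cover [mα : MeasurableSpace α] (μ : Measure α)
    [IsFiniteMeasure μ] {𝒜 : Set (Set α)} (h𝒜 : IsSetAlgebra 𝒜) (hgen : mα = generateFrom 𝒜)
    {s : Set α} (hs : MeasurableSet s) :
    μ s = ⨅ (t : ℕ → Set α) (_ : ∀ n, t n ∈ 𝒜) (_ : s ⊆ ⋃ n, t n), ∑' n, μ (t n) := by
  have h𝒜m : ∀ t ∈ 𝒜, MeasurableSet t := fun t ht => hgen ▸ measurableSet_generateFrom ht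
  let f : Set α → ℝ≥0∞ := extend fun t (_ : t ∈ 𝒜) => μ t
  let O := OuterMeasure.ofFunction f (by simp [f, extend_eq _ h𝒜.empty_mem])
  have hO : ∀ u, O u = ⨅ (t : ℕ → Set α) (_ : ∀ n, t n ∈ 𝒜) (_ : u ⊆ ⋃ n, t n),
      ∑' n, μ (t n) := fun u =>
    (OuterMeasure.ofFunction_eq_iInf_mem _ _ (fun _ => extend_eq_top _) u).trans <|
      iInf_congr fun t => iInf_congr fun ht => iInf_congr fun _ =>
        tsum_congr fun n => extend_eq _ (ht n)
  have hcar : mα ≤ O.caratheodory := hgen ▸ generateFrom_le fun t ht =>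
    OuterMeasure.ofFunction_caratheodory fun u => by
      by_cases hu : u ∈ 𝒜
      · dsimp only [f]
        rw [extend_eq _ hu, extend_eq _ (h𝒜.inter_mem hu ht), extend_eq _ (h𝒜.sdiff_mem hu ht),
          measure_inter_add_sdiff _ (h𝒜m t ht)]
      · simp [f, extend_eq_top _ hu]
  have hO𝒜 : ∀ t ∈ 𝒜, μ t = O t := fun t ht => by
    refine le_antisymm ?_ ((OuterMeasure.ofFunction_le t).trans_eq (extend_eq _ ht))
    rw [hO]
    exact le_iInf₂ fun u _ => le_iInf fun htu => (measure_mono htu).trans (measure_iUnion_le u)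
  have hμO : μ = O.toMeasure hcar :=
    ext_of_generate_finite 𝒜 hgen h𝒜.isSetRing.isSetSemiring.isPiSystem
      (fun t ht => by rw [toMeasure_apply _ _ (h𝒜m t ht), hO𝒜 t ht])
      (by rw [toMeasure_apply _ _ .univ, hO𝒜 _ h𝒜.univ_mem])
  rw [← hO, hμO, toMeasure_apply _ _ hs]

theorem iInf_tsum_adapted_cover_eq {ℱ : ℕ → MeasurableSpace α} (hℱ : Monotone ℱ)
    (f : Set α → ℝ≥0∞) (hf : f ∅ = 0) (B : Set α) :
    ⨅ (A : ℕ → Set α) (_ : ∀ n, MeasurableSet[ℱ n] (A n)) (_ : B ⊆ ⋃ n, A n), ∑' n, f (A n) =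
      ⨅ (t : ℕ → Set α) (_ : ∀ n, t n ∈ ⋃ k, {s | MeasurableSet[ℱ k] s})
        (_ : B ⊆ ⋃ n, t n), ∑' n, f (t n) := by
  refine le_antisymm (le_iInf₂ fun t ht => le_iInf fun hBt => ?_)
    (le_iInf₂ fun A hA => le_iInf fun hBA =>
      iInf₂_le_of_le A (fun n => mem_iUnion.2 ⟨n, hA n⟩) (iInf_le _ hBA))
  choose k hk using fun n => mem_iUnion.1 (ht n)
  have hg : Injective fun n => Nat.pair n (k n) := fun a b h => (Nat.pair_eq_pair.1 h).1
  refine iInf₂_le_of_le (extend (fun n => Nat.pair n (k n)) t fun _ => ∅) (fun j => ?_) ?_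
  · by_cases hj : ∃ n, Nat.pair n (k n) = j
    · obtain ⟨n, rfl⟩ := hj
      rw [hg.extend_apply]
      exact hℱ (Nat.right_le_pair _ _) _ (hk n)
    · rw [extend_apply' _ _ _ hj]
      exact @MeasurableSet.empty _ (ℱ j)
  · refine iInf_le_of_le (hBt.trans (iUnion_mono' fun n => ⟨_, (hg.extend_apply _ _ n).ge⟩)) ?_
    have hf' : f ∘ (fun _ : ℕ => (∅ : Set α)) = 0 := funext fun _ => hf
    simp_rw [apply_extend f, hf']
    exact (tsum_extend_zero hg _).le

end MeasureTheory

section Shift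

variable {E : Type*}

theorem Am_antitone : Antitone (Am E) := fun _ _ h =>
  iSup₂_le fun i hi => le_iSup₂_of_le i (h.trans hi) le_rfl

theorem comap_eval_le_Am {m i : ℤ} (h : m ≤ i) :
    MeasurableSpace.comap (fun σ : ℤ → E => σ i) ⊤ ≤ Am E m :=
  le_iSup₂_of_le i h le_rfl

theorem measurableSet_eval_Am {m i : ℤ} (h : m ≤ i) (s : Set E) :
    MeasurableSet[Am E m] {σ : ℤ → E | σ i ∈ s} :=
  comap_eval_le_Am h _ ⟨s, trivial, rfl⟩

theorem sigAll_eq_iSup : sigAll E = ⨆ i : ℤ, MeasurableSpace.comap (fun σ : ℤ → E => σ i) ⊤ :=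
  rfl

theorem Am_le_sigAll (m : ℤ) : Am E m ≤ sigAll E := by
  rw [sigAll_eq_iSup]
  exact iSup₂_le fun i _ => le_iSup_of_le i le_rfl

theorem iSup_Am_neg : ⨆ n : ℕ, Am E (-(n : ℤ)) = sigAll E := by
  refine le_antisymm (iSup_le fun n => Am_le_sigAll _) ?_
  rw [sigAll_eq_iSup]
  exact iSup_le fun i => le_iSup_of_le (-i).toNat (comap_eval_le_Am (by omega))

theorem measurableSet_cyl (m : ℤ) (j : ℕ) (e : ℤ → E) : MeasurableSet[Am E m] (cyl m j e) := by
  simp only [cyl, ofPred_forall]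
  exact .iInter fun k => .iInter fun hk => .iInter fun _ => measurableSet_eval_Am hk {e k}

variable (E) in
def cylinders (m : ℤ) : Set (Set (ℤ → E)) := {A | ∃ j e, cyl m j e = A}

theorem cyl_subset_cyl {m : ℤ} {j j' : ℕ} {e e' σ : ℤ → E} (hj : j ≤ j') (h : σ ∈ cyl m j e)
    (h' : σ ∈ cyl m j' e') : cyl m j' e' ⊆ cyl m j e := by
  intro τ hτ k hk₁ hk₂
  have hk₂' : k ≤ m + j' := by omega
  rw [hτ k hk₁ hk₂', ← h' k hk₁ hk₂', h k hk₁ hk₂]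

theorem isPiSystem_cylinders (m : ℤ) : IsPiSystem (cylinders E m) := by
  rintro _ ⟨j, e, rfl⟩ _ ⟨j', e', rfl⟩ ⟨σ, h, h'⟩
  rcases le_total j j' with hj | hj
  · exact ⟨j', e', (inter_eq_self_of_subset_right (cyl_subset_cyl hj h h')).symm⟩
  · exact ⟨j, e, (inter_eq_self_of_subset_left (cyl_subset_cyl hj h' h)).symm⟩

theorem finite_range_cyl [Finite E] (m : ℤ) (j : ℕ) : (range (cyl (E := E) m j)).Finite := by
  refine (finite_range fun y : Icc m (m + j) → E =>
    {σ : ℤ → E | ∀ k : Icc m (m + j), σ k = y k}).subset ?_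
  rintro _ ⟨e, rfl⟩
  exact ⟨fun k => e k, by ext σ; simp [cyl]⟩

theorem Am_eq_generateFrom_cylinders [Finite E] (m : ℤ) :
    Am E m = generateFrom (cylinders E m) := by
  refine le_antisymm (iSup₂_le fun i hi => ?_) (generateFrom_le ?_)
  · rintro _ ⟨s, -, rfl⟩
    obtain ⟨j, rfl⟩ : ∃ j : ℕ, i = m + j := ⟨(i - m).toNat, by omega⟩
    have hunion :
        (fun σ : ℤ → E => σ (m + j)) ⁻¹' s = ⋃₀ (cyl m j '' {e | e (m + j) ∈ s}) := by
      ext σ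
      refine ⟨fun hσ => ⟨cyl m j σ, ⟨σ, hσ, rfl⟩, fun _ _ _ => rfl⟩, ?_⟩
      rintro ⟨_, ⟨e, he, rfl⟩, hσ⟩
      rwa [mem_preimage, hσ _ hi le_rfl]
    rw [hunion]
    refine .sUnion ((finite_range_cyl m j).subset (image_subset_range _ _)).countable ?_
    rintro _ ⟨e, -, rfl⟩
    exact measurableSet_generateFrom ⟨j, e, rfl⟩
  · rintro _ ⟨j, e, rfl⟩
    exact measurableSet_cyl m j e

end Shift

section Lift

variable {E V K : Type*} [Fintype E] [MetricSpace K] [MeasurableSpace K]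

theorem CMS.measurable_orbit (S : CMS E V K) (e : ℤ → E) (m : ℤ) (j : ℕ) :
    Measurable fun x => S.orbit e m x j := by
  induction j with
  | zero => exact S.w_meas (e m)
  | succ j ih => exact (S.w_meas _).comp ih

theorem CMS.measurable_pathProb (S : CMS E V K) (e : ℤ → E) (m : ℤ) (j : ℕ) :
    Measurable fun x => S.pathProb e m x j := by
  induction j with
  | zero => exact S.p_meas (e m)
  | succ j ih => exact ih.mul ((S.p_meas _).comp (S.measurable_orbit e m j))

theorem liftMeas_eq_of_isKernel {S : CMS E V K} {P : ∀ m : ℤ, K → @Measure (ℤ → E) (Am E m)}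
    (hP : IsKernel S P) (μ : Measure K) [IsProbabilityMeasure μ]
    (Mbar : @Measure (ℤ → E) (sigAll E)) [@IsProbabilityMeasure _ (sigAll E) Mbar]
    (hcyl : ∀ (m : ℤ) (j : ℕ) (e : ℤ → E),
      Mbar (cyl m j e) = ∫⁻ x, ENNReal.ofReal (S.pathProb e m x j) ∂μ)
    (m : ℤ) {A : Set (ℤ → E)} (hA : MeasurableSet[Am E m] A) :
    liftMeas P m μ A = Mbar A := by
  have := hP.1 m
  have : @IsProbabilityMeasure _ (Am E m) (Mbar.trim (Am_le_sigAll m)) :=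
    ⟨by rw [trim_measurableSet_eq _ .univ, measure_univ]⟩
  rw [← trim_measurableSet_eq (Am_le_sigAll m) hA]
  refine lintegral_apply_eq_of_isPiSystem (mβ := Am E m) (Am_eq_generateFrom_cylinders m)
    (isPiSystem_cylinders m) ?_ ?_ hA
  · rintro _ ⟨j, e, rfl⟩
    simp_rw [hP.2]
    exact (S.measurable_pathProb e m j).ennreal_ofReal
  · rintro _ ⟨j, e, rfl⟩
    rw [trim_measurableSet_eq _ (measurableSet_cyl m j e), hcyl]
    simp_rw [hP.2]

end Lift

theorem statement13_general {E V K : Type*} [Fintype E] [MetricSpace K]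
    [MeasurableSpace K] (S : CMS E V K)
    (P : ∀ m : ℤ, K → @Measure (ℤ → E) (Am E m)) (hP : IsKernel S P)
    (μ : Measure K) [IsProbabilityMeasure μ]
    (Mbar : @Measure (ℤ → E) (sigAll E)) (hprob : @IsProbabilityMeasure _ (sigAll E) Mbar)
    (hcyl : ∀ (m : ℤ) (j : ℕ) (e : ℤ → E),
      Mbar (cyl m j e) = ∫⁻ x, ENNReal.ofReal (S.pathProb e m x j) ∂μ) :
    ∀ B : Set (ℤ → E), MeasurableSet[sigAll E] B → PhiM P μ B = Mbar B := by
  intro B hB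
  have hmono : Monotone fun n : ℕ => Am E (-(n : ℤ)) := fun a b h => Am_antitone (by omega)
  calc PhiM P μ B
      = ⨅ (A : ℕ → Set (ℤ → E)) (_ : ∀ n : ℕ, MeasurableSet[Am E (-(n : ℤ))] (A n))
          (_ : B ⊆ ⋃ n, A n), ∑' n, Mbar (A n) :=
        iInf_congr fun A => iInf_congr fun hA => iInf_congr fun _ => tsum_congr fun n =>
          liftMeas_eq_of_isKernel hP μ Mbar hcyl _ (hA n)
    _ = ⨅ (t : ℕ → Set (ℤ → E))
          (_ : ∀ n, t n ∈ ⋃ k : ℕ, {s | MeasurableSet[Am E (-(k : ℤ))] s})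
          (_ : B ⊆ ⋃ n, t n), ∑' n, Mbar (t n) :=
        iInf_tsum_adapted_cover_eq hmono _ measure_empty B
    _ = Mbar B :=
        (IsSetAlgebra.measure_eq_iInf_tsum_cover (mα := sigAll E) Mbar
          (isSetAlgebra_iUnion_measurableSet hmono)
          (by rw [generateFrom_iUnion_measurableSet, iSup_Am_neg]) hB).symm

/-- the generalized Markov measure `M = Φ(μ)` coincides on the Borel
σ-algebra of `Σ` with the shift-invariant probability measure `M̄` determined on cylinders
by `M̄(_m[e_m,…,e_n]) = ∫ p_{e_m}(x)⋯p_{e_n}(w_{e_{n-1}}∘⋯∘w_{e_m}x) dμ(x)`. -/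
theorem statement13 {E V K : Type*} [Fintype E] [MetricSpace K] [CompleteSpace K]
    [MeasurableSpace K] [BorelSpace K] (S : CMS E V K)
    (P : ∀ m : ℤ, K → @Measure (ℤ → E) (Am E m)) (hP : IsKernel S P)
    (μ : Measure K) [IsProbabilityMeasure μ]
    (hinv : ∀ g : K → ℝ≥0∞, Measurable g →
      ∫⁻ x, g x ∂μ = ∑ e : E, ∫⁻ x, ENNReal.ofReal (S.p e x) * g (S.w e x) ∂μ)
    (Mbar : @Measure (ℤ → E) (sigAll E)) (hprob : @IsProbabilityMeasure _ (sigAll E) Mbar)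
    (hcyl : ∀ (m : ℤ) (j : ℕ) (e : ℤ → E),
      Mbar (cyl m j e) = ∫⁻ x, ENNReal.ofReal (S.pathProb e m x j) ∂μ)
    (hshift : @Measure.map (ℤ → E) (ℤ → E) (sigAll E) (sigAll E) shiftMap Mbar = Mbar) :
    ∀ B : Set (ℤ → E), MeasurableSet[sigAll E] B → PhiM P μ B = Mbar B :=
  statement13_general S P hP μ Mbar hprob hcyl
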